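/- Fix real numbers λ > 0 and 0 < β < 1. For every real s > 0, the series of expectations ∑_{m=1}^∞ E[(s − T_m)₊^{−β}] converges and equals λ s^{1−β}/(1−β). -/

import Mathlib

/-!
The partial sum `T (n + 1)` has the Erlang law `gammaMeasure (n + 1) λ`, since convolving a
gamma density with the exponential one raises the shape by one. The Erlang densities
`λ e^{-λx} (λx)^n / n!` add up to the constant `λ` on `[0, ∞)`, so by monotone convergence the
series of expectations is `λ ∫₀^∞ (s - x)₊^{-β} dx = λ s^{1-β} / (1 - β)`.
-/

open MeasureTheory ProbabilityTheory Real

/-- `(x)₊^(-β)`: equals `x ^ (-β)` if `x > 0` and `0` otherwise. -/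
noncomputable def posNegPow (x β : ℝ) : ℝ := if 0 < x then x ^ (-β) else 0

open Set
open scoped ENNReal

lemma measurable_gammaPDF (a r : ℝ) : Measurable (gammaPDF a r) :=
  (measurable_gammaPDFReal a r).ennreal_ofReal

lemma lintegral_Ioc_ofReal_rpow {p x : ℝ} (hp : -1 < p) (hx : 0 ≤ x) :
    ∫⁻ y in Ioc 0 x, ENNReal.ofReal (y ^ p) = ENNReal.ofReal (x ^ (p + 1) / (p + 1)) := by
  have hint : IntegrableOn (· ^ p) (Ioc 0 x) :=
    (intervalIntegrable_iff_integrableOn_Ioc_of_le hx).mp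
      (intervalIntegral.intervalIntegrable_rpow' hp)
  rw [← ofReal_integral_eq_lintegral_ofReal hint
      (ae_restrict_of_forall_mem measurableSet_Ioc fun y hy ↦ rpow_nonneg hy.1.le p),
    ← intervalIntegral.integral_of_le hx, integral_rpow (Or.inl hp),
    zero_rpow (by linarith), sub_zero]

lemma gammaPDF_lconvolution_exponentialPDF {a r : ℝ} (ha : 0 < a) (hr : 0 < r) :
    gammaPDF a r ⋆ₗ exponentialPDF r = gammaPDF (a + 1) r := by
  ext x
  rw [lconvolution_def]
  rcases lt_or_ge x 0 with hx | hx
  · have hzero (y : ℝ) : gammaPDF a r y * exponentialPDF r (-y + x) = 0 := by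
      rcases lt_or_ge y 0 with hy | hy
      · rw [gammaPDF_of_neg hy, zero_mul]
      · rw [exponentialPDF_of_neg (by linarith), mul_zero]
    simp only [hzero, lintegral_zero, gammaPDF_of_neg hx]
  set C := r ^ (a + 1) / Gamma a * exp (-(r * x))
  have hdensity (y : ℝ) : gammaPDF a r y * exponentialPDF r (-y + x)
      = (Icc 0 x).indicator (fun y ↦ ENNReal.ofReal C * ENNReal.ofReal (y ^ (a - 1))) y := by
    by_cases hy : y ∈ Icc 0 x
    · rw [indicator_of_mem hy, gammaPDF_of_nonneg hy.1,
        exponentialPDF_of_nonneg (by linarith [hy.2]),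
        ← ENNReal.ofReal_mul' (by positivity), ← ENNReal.ofReal_mul (by positivity)]
      congr 1
      have : exp (-(r * x)) = exp (-(r * y)) * exp (-(r * (-y + x))) := by
        rw [← exp_add]; ring_nf
      simp only [C, rpow_add hr, rpow_one, this]
      ring
    · rw [indicator_of_notMem hy]
      rcases lt_or_ge y 0 with hy0 | hy0
      · rw [gammaPDF_of_neg hy0, zero_mul]
      · rw [exponentialPDF_of_neg (by simp_all), mul_zero]
  simp_rw [hdensity]
  rw [lintegral_indicator measurableSet_Icc, lintegral_const_mul _ (by fun_prop),
    setLIntegral_congr Ioc_ae_eq_Icc.symm, lintegral_Ioc_ofReal_rpow (by linarith) hx,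
    sub_add_cancel, ← ENNReal.ofReal_mul (by positivity), gammaPDF_of_nonneg hx,
    Gamma_add_one ha.ne', add_sub_cancel_right]
  congr 1
  simp only [C]
  field_simp

lemma gammaMeasure_conv_expMeasure {a r : ℝ} (ha : 0 < a) (hr : 0 < r) :
    gammaMeasure a r ∗ expMeasure r = gammaMeasure (a + 1) r := by
  rw [expMeasure, gammaMeasure, gammaMeasure,
    conv_withDensity_eq_lconvolution (measurable_gammaPDF _ _) (measurable_gammaPDF _ _)]
  exact congrArg _ (gammaPDF_lconvolution_exponentialPDF ha hr)

lemma ProbabilityTheory.iIndepFun.map_sum_range_succ_eq_gammaMeasure {Ω : Type*} [MeasurableSpace Ω]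
    {P : Measure Ω} [IsFiniteMeasure P] {r : ℝ} (hr : 0 < r) {X : ℕ → Ω → ℝ}
    (hmeas : ∀ i, Measurable (X i)) (hindep : iIndepFun X P)
    (hlaw : ∀ i, P.map (X i) = expMeasure r) (n : ℕ) :
    P.map (∑ i ∈ Finset.range (n + 1), X i) = gammaMeasure (n + 1) r := by
  induction n with
  | zero => simpa [expMeasure] using hlaw 0
  | succ n ih =>
    rw [Finset.sum_range_succ,
      (hindep.indepFun_sum_range_succ hmeas (n + 1)).map_add_eq_map_conv_map (by fun_prop)
        (hmeas _), ih, hlaw, gammaMeasure_conv_expMeasure (by positivity) hr]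
    push_cast
    rfl

lemma tsum_gammaPDF_natCast_add_one {r : ℝ} (hr : 0 ≤ r) (x : ℝ) :
    ∑' n : ℕ, gammaPDF (n + 1) r x = (Ici 0).indicator (fun _ ↦ ENNReal.ofReal r) x := by
  rcases lt_or_ge x 0 with hx | hx
  · simp [gammaPDF_of_neg hx, hx]
  have hterm (n : ℕ) : gammaPDF (n + 1) r x
      = ENNReal.ofReal (r * exp (-(r * x)) * ((r * x) ^ n / n.factorial)) := by
    rw [gammaPDF_of_nonneg hx, add_sub_cancel_right, Gamma_nat_eq_factorial, ← Nat.cast_succ,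
      rpow_natCast, rpow_natCast, mul_pow, pow_succ]
    ring_nf
  -- the Poisson weights `exp (-(r * x)) * (r * x) ^ n / n!` sum to one
  have hsum : HasSum (fun n : ℕ ↦ r * exp (-(r * x)) * ((r * x) ^ n / n.factorial)) r := by
    have := (NormedSpace.expSeries_div_hasSum_exp (r * x)).mul_left (r * exp (-(r * x)))
    rwa [← exp_eq_exp_ℝ, mul_assoc, ← exp_add, neg_add_cancel, exp_zero, mul_one] at this
  rw [indicator_of_mem (mem_Ici.mpr hx), tsum_congr hterm, ← ENNReal.ofReal_tsum_of_nonneg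
    (fun n ↦ mul_nonneg (by positivity) (div_nonneg (pow_nonneg (mul_nonneg hr hx) n)
      (by positivity))) hsum.summable, hsum.tsum_eq]

lemma sum_gammaMeasure_natCast_add_one {r : ℝ} (hr : 0 ≤ r) :
    Measure.sum (fun n : ℕ ↦ gammaMeasure (n + 1) r)
      = ENNReal.ofReal r • volume.restrict (Ici 0) := by
  have hdensity : ∑' n : ℕ, gammaPDF (n + 1) r = (Ici 0).indicator fun _ ↦ ENNReal.ofReal r := by
    ext x
    rw [ENNReal.tsum_apply, tsum_gammaPDF_natCast_add_one hr]
  simp only [gammaMeasure]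
  rw [← withDensity_tsum fun n ↦ measurable_gammaPDF _ _, hdensity,
    withDensity_indicator measurableSet_Ici, withDensity_const]

lemma setLIntegral_Ici_zero_comp_sub_left (f : ℝ → ℝ≥0∞) (s : ℝ) :
    ∫⁻ x in Ici 0, f (s - x) = ∫⁻ u in Iic s, f u := by
  rw [← lintegral_indicator measurableSet_Ici, ← lintegral_indicator measurableSet_Iic,
    ← lintegral_sub_left_eq_self _ s]
  exact lintegral_congr fun x ↦ by simp [indicator]

lemma posNegPow_nonneg (x β : ℝ) : 0 ≤ posNegPow x β := by
  unfold posNegPow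
  split_ifs with hx
  · exact rpow_nonneg hx.le _
  · exact le_rfl

lemma measurable_posNegPow (β : ℝ) : Measurable (posNegPow · β) :=
  Measurable.ite measurableSet_Ioi (by fun_prop) measurable_const

lemma lintegral_Iic_posNegPow {β s : ℝ} (hβ : β < 1) (hs : 0 ≤ s) :
    ∫⁻ u in Iic s, ENNReal.ofReal (posNegPow u β) = ENNReal.ofReal (s ^ (1 - β) / (1 - β)) := by
  have hsupport : (Iic s).indicator (fun u ↦ ENNReal.ofReal (posNegPow u β))
      = (Ioc 0 s).indicator (fun u ↦ ENNReal.ofReal (u ^ (-β))) := by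
    ext u
    by_cases hu : 0 < u <;> simp [indicator, posNegPow, hu]
  rw [← lintegral_indicator measurableSet_Iic, hsupport, lintegral_indicator measurableSet_Ioc,
    lintegral_Ioc_ofReal_rpow (by linarith) hs, neg_add_eq_sub]

lemma integrable_and_hasSum_integral_of_tsum_lintegral {Ω : Type*} [MeasurableSpace Ω]
    {μ : Measure Ω} {f : ℕ → Ω → ℝ} {c : ℝ} (hf : ∀ n, 0 ≤ᵐ[μ] f n)
    (hfm : ∀ n, AEStronglyMeasurable (f n) μ) (hc : 0 ≤ c)
    (h : ∑' n, ∫⁻ ω, ENNReal.ofReal (f n ω) ∂μ = ENNReal.ofReal c) :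
    (∀ n, Integrable (f n) μ) ∧ HasSum (fun n ↦ ∫ ω, f n ω ∂μ) c := by
  have hfin (n : ℕ) : ∫⁻ ω, ENNReal.ofReal (f n ω) ∂μ ≠ ∞ :=
    ne_top_of_le_ne_top (h ▸ ENNReal.ofReal_ne_top) (ENNReal.le_tsum n)
  refine ⟨fun n ↦ ⟨hfm n, (hasFiniteIntegral_iff_ofReal (hf n)).mpr (hfin n).lt_top⟩, ?_⟩
  simp_rw [integral_eq_lintegral_of_nonneg_ae (hf _) (hfm _)]
  have := ENNReal.hasSum_toReal (h ▸ ENNReal.ofReal_ne_top)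
  rwa [← ENNReal.tsum_toReal_eq hfin, h, ENNReal.toReal_ofReal hc] at this

theorem stmt_0_general
    {Ω : Type*} [MeasurableSpace Ω] (P : Measure Ω) [IsProbabilityMeasure P]
    (l β s : ℝ) (hl : 0 < l) (hβ1 : β < 1) (hs : 0 < s)
    (α : ℕ → Ω → ℝ) (hmeas : ∀ i, Measurable (α i))
    (hindep : iIndepFun α P)
    (hlaw : ∀ i, P.map (α i) = expMeasure l)
    (T : ℕ → Ω → ℝ) (hT : ∀ n ω, T n ω = ∑ i ∈ Finset.range n, α i ω) :
    (∀ n : ℕ, Integrable (fun ω => posNegPow (s - T (n + 1) ω) β) P) ∧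
      HasSum (fun n : ℕ => ∫ ω, posNegPow (s - T (n + 1) ω) β ∂P)
        (l * s ^ (1 - β) / (1 - β)) := by
  have hTsum (n : ℕ) : T n = ∑ i ∈ Finset.range n, α i :=
    funext fun ω ↦ by rw [hT, Finset.sum_apply]
  have hTmeas (n : ℕ) : Measurable (T n) := by rw [hTsum]; fun_prop
  have hg : Measurable fun x ↦ posNegPow (s - x) β := (measurable_posNegPow β).comp (by fun_prop)
  refine integrable_and_hasSum_integral_of_tsum_lintegral
    (fun n ↦ ae_of_all _ fun ω ↦ posNegPow_nonneg _ _)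
    (fun n ↦ (hg.comp (hTmeas _)).aestronglyMeasurable)
    (div_nonneg (mul_nonneg hl.le (rpow_nonneg hs.le _)) (by linarith)) ?_
  calc ∑' n : ℕ, ∫⁻ ω, ENNReal.ofReal (posNegPow (s - T (n + 1) ω) β) ∂P
      = ∑' n : ℕ, ∫⁻ x, ENNReal.ofReal (posNegPow (s - x) β) ∂(gammaMeasure (n + 1) l) := by
        refine tsum_congr fun n ↦ ?_
        rw [← hindep.map_sum_range_succ_eq_gammaMeasure hl hmeas hlaw, ← hTsum,
          lintegral_map hg.ennreal_ofReal (hTmeas _)]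
    _ = ENNReal.ofReal l * ∫⁻ x in Ici 0, ENNReal.ofReal (posNegPow (s - x) β) := by
        rw [← lintegral_sum_measure, sum_gammaMeasure_natCast_add_one hl.le, lintegral_smul_measure,
          smul_eq_mul]
    _ = ENNReal.ofReal (l * s ^ (1 - β) / (1 - β)) := by
        rw [setLIntegral_Ici_zero_comp_sub_left (fun u ↦ ENNReal.ofReal (posNegPow u β)),
          lintegral_Iic_posNegPow hβ1 hs.le, ← ENNReal.ofReal_mul hl.le, mul_div_assoc]

/-- For `λ > 0`, `0 < β < 1` and `s > 0`, with `T_n` the partial sums of i.i.d.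
exponential random variables of rate `λ`, the series `∑_{m=1}^∞ E[(s − T_m)₊^{−β}]` converges
and equals `λ s^{1−β}/(1−β)`. -/
theorem stmt_0
    {Ω : Type*} [MeasurableSpace Ω] (P : Measure Ω) [IsProbabilityMeasure P]
    (l β s : ℝ) (hl : 0 < l) (hβ0 : 0 < β) (hβ1 : β < 1) (hs : 0 < s)
    (α : ℕ → Ω → ℝ) (hmeas : ∀ i, Measurable (α i))
    (hindep : iIndepFun α P)
    (hlaw : ∀ i, P.map (α i) = expMeasure l)
    (T : ℕ → Ω → ℝ) (hT : ∀ n ω, T n ω = ∑ i ∈ Finset.range n, α i ω) :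
    (∀ n : ℕ, Integrable (fun ω => posNegPow (s - T (n + 1) ω) β) P) ∧
      HasSum (fun n : ℕ => ∫ ω, posNegPow (s - T (n + 1) ω) β ∂P)
        (l * s ^ (1 - β) / (1 - β)) :=
  stmt_0_general P l β s hl hβ1 hs α hmeas hindep hlaw T hT
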